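/- For real a > 0, y > 0 and complex b, c, p, λ, μ with 0 < Re(μ) < Re(λ + p) + 1, the integral ∫₀^∞ x^{μ-1} (x + a + √(x² + 2ax))^{-λ} W_{p,b,c}(y / (x + a + √(x² + 2ax))) dx equals Σ_{k=0}^∞ [(-c)^k (y/2)^{2k+p+1} / (Γ(k + 3/2) Γ(k + p + (b+2)/2))] · 2(λ+p+1+2k) a^{-(λ+p+1+2k)} (a/2)^μ Γ(2μ) Γ(λ+p+1+2k-μ) / Γ(1+λ+p+1+2k+μ), i.e., termwise integration of the Struve series against the Oberhettinger kernel is valid and each term is evaluated by the Oberhettinger formula. -/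

import Mathlib

open MeasureTheory Complex

/-- The generalized Struve function `W_{p,b,c}(z)`. -/
noncomputable def genStruve (p b c z : ℂ) : ℂ :=
  ∑' k : ℕ, (-c) ^ k * (z / 2) ^ (2 * (k : ℂ) + p + 1) /
    (Complex.Gamma ((k : ℂ) + 3 / 2) * Complex.Gamma ((k : ℂ) + p + (b + 2) / 2))

/-! Write `u = x + a + √(x² + 2ax)`. Expanding `W_{p,b,c}(y/u)` in its power series, the `k`-th
term carries `u^{-(λ+p+1+2k)}`, so termwise the integral is an Oberhettinger integral with
`ρ = λ+p+1+2k`. Since `u ≥ a`, the `k`-th kernel is dominated by `a^{-2k}` times the `k = 0`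
one, and the Struve coefficients decay faster than any geometric sequence (their ratio is
`O(1/k²)`), so `∑ ∫ |term| < ∞` and summation and integration can be exchanged.

The Oberhettinger formula itself comes from the substitution `x = (a/2)(1/v - 2 + v)`,
`v ∈ (0, 1)`, under which `u = a/v` and the integral becomes
`(a/2)^μ a^{-ρ} ∫₀¹ v^{ρ-μ-1} (1-v)^{2μ-1} (1+v) dv`, a sum of two beta integrals.
-/

open Filter Set

noncomputable section

def oberhettingerBase (a x : ℝ) : ℝ := x + a + √(x ^ 2 + 2 * a * x)

section Base

variable {a x : ℝ}

theorem continuous_oberhettingerBase : Continuous (oberhettingerBase a) := by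
  unfold oberhettingerBase; fun_prop

theorem le_oberhettingerBase (hx : 0 ≤ x) : a ≤ oberhettingerBase a x := by
  have := Real.sqrt_nonneg (x ^ 2 + 2 * a * x)
  unfold oberhettingerBase; linarith

theorem self_le_oberhettingerBase (ha : 0 ≤ a) : x ≤ oberhettingerBase a x := by
  have := Real.sqrt_nonneg (x ^ 2 + 2 * a * x)
  unfold oberhettingerBase; linarith

theorem oberhettingerBase_pos (ha : 0 < a) (hx : 0 ≤ x) : 0 < oberhettingerBase a x :=
  ha.trans_le (le_oberhettingerBase hx)

end Base

def oberhettingerSubst (a v : ℝ) : ℝ := a / 2 * (v⁻¹ - 2 + v)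

section Subst

variable {a v : ℝ}

theorem oberhettingerSubst_eq (hv : v ≠ 0) :
    oberhettingerSubst a v = a * (1 - v) ^ 2 / (2 * v) := by
  unfold oberhettingerSubst; field_simp; ring

theorem oberhettingerSubst_pos (ha : 0 < a) (hv : v ∈ Ioo (0 : ℝ) 1) :
    0 < oberhettingerSubst a v := by
  rw [oberhettingerSubst_eq hv.1.ne']
  have : 0 < 1 - v := by linarith [hv.2]
  have := hv.1
  positivity

theorem hasDerivAt_oberhettingerSubst (hv : v ≠ 0) :
    HasDerivAt (oberhettingerSubst a) (a / 2 * (1 - (v ^ 2)⁻¹)) v := by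
  rw [show a / 2 * (1 - (v ^ 2)⁻¹) = a / 2 * (-(v ^ 2)⁻¹ + 1) by ring]
  exact (((hasDerivAt_inv hv).sub_const 2).add (hasDerivAt_id v)).const_mul (a / 2)

theorem oberhettingerBase_oberhettingerSubst (ha : 0 < a) (hv : v ∈ Ioo (0 : ℝ) 1) :
    oberhettingerBase a (oberhettingerSubst a v) = a / v := by
  have hv0 := hv.1
  have hsq : oberhettingerSubst a v ^ 2 + 2 * a * oberhettingerSubst a v
      = (a * (1 - v ^ 2) / (2 * v)) ^ 2 := by
    rw [oberhettingerSubst_eq hv0.ne']; field_simp; ring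
  have : 0 ≤ a * (1 - v ^ 2) / (2 * v) := by
    have : 0 ≤ 1 - v ^ 2 := by nlinarith [hv.2]
    positivity
  rw [oberhettingerBase, hsq, Real.sqrt_sq this, oberhettingerSubst_eq hv0.ne']
  field_simp; ring

theorem oberhettingerSubst_div_oberhettingerBase (ha : 0 < a) {x : ℝ} (hx : 0 ≤ x) :
    oberhettingerSubst a (a / oberhettingerBase a x) = x := by
  have hU := oberhettingerBase_pos ha hx
  have hsq : √(x ^ 2 + 2 * a * x) ^ 2 = x ^ 2 + 2 * a * x := Real.sq_sqrt (by positivity)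
  unfold oberhettingerSubst
  rw [oberhettingerBase] at hU ⊢
  set s := √(x ^ 2 + 2 * a * x)
  field_simp
  linear_combination hsq

theorem injOn_oberhettingerSubst (ha : 0 < a) : InjOn (oberhettingerSubst a) (Ioo 0 1) := by
  intro v hv w hw h
  rw [oberhettingerSubst_eq hv.1.ne', oberhettingerSubst_eq hw.1.ne'] at h
  have hv0 := hv.1; have hw0 := hw.1
  field_simp at h
  have : (w - v) * (1 - v * w) = 0 := by linear_combination h
  rcases mul_eq_zero.1 this with h | h
  · linarith
  · nlinarith [hv.2, hw.2]

theorem image_oberhettingerSubst (ha : 0 < a) : oberhettingerSubst a '' Ioo 0 1 = Ioi 0 := by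
  refine (image_subset_iff.2 fun v hv => oberhettingerSubst_pos ha hv).antisymm fun x hx => ?_
  have hlt : a < oberhettingerBase a x := by
    have := Real.sqrt_nonneg (x ^ 2 + 2 * a * x)
    unfold oberhettingerBase; linarith [mem_Ioi.1 hx]
  have hU := ha.trans hlt
  refine ⟨a / oberhettingerBase a x, ⟨by positivity, (div_lt_one hU).2 hlt⟩,
    oberhettingerSubst_div_oberhettingerBase ha (le_of_lt hx)⟩

end Subst

theorem ofReal_cpow_eq_exp_log {r : ℝ} (hr : 0 < r) (w : ℂ) :
    (r : ℂ) ^ w = exp (w * Real.log r) := by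
  rw [cpow_def_of_ne_zero (ofReal_ne_zero.2 hr.ne'), ← ofReal_log hr.le, mul_comm]

def oberhettingerKernel (a : ℝ) (μ ρ : ℂ) (x : ℝ) : ℂ :=
  (x : ℂ) ^ (μ - 1) * (oberhettingerBase a x : ℂ) ^ (-ρ)

theorem abs_deriv_smul_oberhettingerKernel_oberhettingerSubst {a v : ℝ} (ha : 0 < a)
    (hv : v ∈ Ioo (0 : ℝ) 1) (μ ρ : ℂ) :
    |a / 2 * (1 - (v ^ 2)⁻¹)| • oberhettingerKernel a μ ρ (oberhettingerSubst a v) =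
      ((a : ℂ) / 2) ^ μ * (a : ℂ) ^ (-ρ) *
        ((v : ℂ) ^ (ρ - μ - 1) * (1 - (v : ℂ)) ^ (2 * μ - 1) * (1 + v)) := by
  obtain ⟨hv0, hv1⟩ := hv
  have h1v : 0 < 1 - v := by linarith
  have h1v' : 0 < 1 + v := by linarith
  have hjac : |a / 2 * (1 - (v ^ 2)⁻¹)| = a * (1 - v) * (1 + v) / (2 * v ^ 2) := by
    rw [show a / 2 * (1 - (v ^ 2)⁻¹) = -(a * (1 - v) * (1 + v) / (2 * v ^ 2)) by
      field_simp; ring, abs_neg, abs_of_pos (by positivity)]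
  have hjac_log : Real.log (a * (1 - v) * (1 + v) / (2 * v ^ 2)) =
      Real.log a + Real.log (1 - v) + Real.log (1 + v) - Real.log 2 - 2 * Real.log v := by
    rw [Real.log_div (by positivity) (by positivity), Real.log_mul (by positivity) h1v'.ne',
      Real.log_mul ha.ne' h1v.ne', Real.log_mul two_ne_zero (by positivity), Real.log_pow]
    push_cast; ring
  have hsubst_log : Real.log (oberhettingerSubst a v) =
      Real.log a + 2 * Real.log (1 - v) - Real.log 2 - Real.log v := by
    rw [oberhettingerSubst_eq hv0.ne', Real.log_div (by positivity) (by positivity),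
      Real.log_mul ha.ne' (by positivity), Real.log_pow, Real.log_mul two_ne_zero hv0.ne']
    push_cast; ring
  have hexp : ∀ r : ℝ, 0 < r → (r : ℂ) = exp (Real.log r) := fun r hr => by
    rw [← ofReal_exp, Real.exp_log hr]
  rw [oberhettingerKernel, oberhettingerBase_oberhettingerSubst ha ⟨hv0, hv1⟩, hjac, real_smul,
    show (a : ℂ) / 2 = ((a / 2 : ℝ) : ℂ) by push_cast; ring,
    show 1 - (v : ℂ) = ((1 - v : ℝ) : ℂ) by push_cast; ring,
    show 1 + (v : ℂ) = ((1 + v : ℝ) : ℂ) by push_cast; ring,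
    hexp _ (by positivity : 0 < a * (1 - v) * (1 + v) / (2 * v ^ 2)), hexp _ h1v',
    ofReal_cpow_eq_exp_log (oberhettingerSubst_pos ha ⟨hv0, hv1⟩),
    ofReal_cpow_eq_exp_log (by positivity : 0 < a / v), ofReal_cpow_eq_exp_log (by positivity),
    ofReal_cpow_eq_exp_log ha, ofReal_cpow_eq_exp_log hv0, ofReal_cpow_eq_exp_log h1v]
  simp only [← exp_add]
  congr 1
  rw [hjac_log, hsubst_log, Real.log_div ha.ne' hv0.ne', Real.log_div ha.ne' two_ne_zero]
  push_cast
  ring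

theorem integral_Ioo_cpow_mul_one_sub_cpow {u w : ℂ} (hu : 0 < u.re) (hw : 0 < w.re) :
    ∫ v in Ioo (0 : ℝ) 1, (v : ℂ) ^ (u - 1) * (1 - (v : ℂ)) ^ (w - 1) =
      Gamma u * Gamma w / Gamma (u + w) := by
  rw [← integral_Ioc_eq_integral_Ioo, ← intervalIntegral.integral_of_le zero_le_one,
    ← betaIntegral, Gamma_mul_Gamma_eq_betaIntegral hu hw,
    mul_div_cancel_left₀ _ (Gamma_ne_zero_of_re_pos (by rw [add_re]; linarith))]

theorem integral_Ioo_cpow_mul_one_sub_cpow_mul_one_add {u w : ℂ} (hu : 0 < u.re)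
    (hw : 0 < w.re) :
    ∫ v in Ioo (0 : ℝ) 1, (v : ℂ) ^ (u - 1) * (1 - (v : ℂ)) ^ (w - 1) * (1 + v) =
      (2 * u + w) * Gamma u * Gamma w / Gamma (u + w + 1) := by
  have hu1 : 0 < (u + 1).re := by rw [add_re, one_re]; linarith
  have hint : ∀ {s : ℂ}, 0 < s.re →
      IntegrableOn (fun v : ℝ => (v : ℂ) ^ (s - 1) * (1 - (v : ℂ)) ^ (w - 1)) (Ioo 0 1) :=
    fun hs => (betaIntegral_convergent hs hw).1.mono_set Ioo_subset_Ioc_self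
  have hsplit : ∀ v ∈ Ioo (0 : ℝ) 1,
      (v : ℂ) ^ (u - 1) * (1 - (v : ℂ)) ^ (w - 1) * (1 + v) =
        (v : ℂ) ^ (u - 1) * (1 - (v : ℂ)) ^ (w - 1) +
          (v : ℂ) ^ (u + 1 - 1) * (1 - (v : ℂ)) ^ (w - 1) := fun v hv => by
    rw [add_sub_right_comm, cpow_add _ _ (ofReal_ne_zero.2 hv.1.ne'), cpow_one]
    ring
  have hne : u + w ≠ 0 := fun h => by
    have := congrArg re h; rw [add_re, zero_re] at this; linarith
  rw [setIntegral_congr_fun measurableSet_Ioo hsplit, integral_add (hint hu) (hint hu1),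
    integral_Ioo_cpow_mul_one_sub_cpow hu hw, integral_Ioo_cpow_mul_one_sub_cpow hu1 hw,
    add_right_comm, Gamma_add_one _ hne, Gamma_add_one _ (fun h => by simp [h] at hu)]
  have := Gamma_ne_zero_of_re_pos (s := u + w) (by rw [add_re]; linarith)
  field_simp
  ring

theorem integral_oberhettingerKernel {a : ℝ} (ha : 0 < a) {μ ρ : ℂ} (hμ : 0 < μ.re)
    (hρ : μ.re < ρ.re) :
    ∫ x in Ioi 0, oberhettingerKernel a μ ρ x =
      2 * ρ * (a : ℂ) ^ (-ρ) * ((a : ℂ) / 2) ^ μ * Gamma (2 * μ) * Gamma (ρ - μ) /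
        Gamma (1 + ρ + μ) := by
  rw [← image_oberhettingerSubst ha,
    integral_image_eq_integral_abs_deriv_smul measurableSet_Ioo
      (fun v hv => (hasDerivAt_oberhettingerSubst hv.1.ne').hasDerivWithinAt)
      (injOn_oberhettingerSubst ha),
    setIntegral_congr_fun measurableSet_Ioo
      (fun v hv => abs_deriv_smul_oberhettingerKernel_oberhettingerSubst ha hv μ ρ),
    integral_const_mul,
    integral_Ioo_cpow_mul_one_sub_cpow_mul_one_add (u := ρ - μ) (by rw [sub_re]; linarith)
      (by simpa using hμ)]
  rw [show ρ - μ + 2 * μ + 1 = 1 + ρ + μ by ring]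
  ring

section Kernel

variable {a : ℝ} {μ ρ : ℂ}

theorem norm_oberhettingerKernel (ha : 0 < a) {x : ℝ} (hx : 0 < x) (μ ρ : ℂ) :
    ‖oberhettingerKernel a μ ρ x‖ = x ^ (μ.re - 1) * oberhettingerBase a x ^ (-ρ.re) := by
  rw [oberhettingerKernel, norm_mul, norm_cpow_eq_rpow_re_of_pos hx,
    norm_cpow_eq_rpow_re_of_pos (oberhettingerBase_pos ha hx.le), sub_re, one_re, neg_re]

theorem norm_oberhettingerKernel_le (ha : 0 < a) {x : ℝ} (hx : 0 < x) (μ : ℂ) {ρ' : ℂ}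
    (h : ρ.re ≤ ρ'.re) :
    ‖oberhettingerKernel a μ ρ' x‖ ≤
      a ^ (ρ.re - ρ'.re) * ‖oberhettingerKernel a μ ρ x‖ := by
  rw [norm_oberhettingerKernel ha hx, norm_oberhettingerKernel ha hx]
  set U := oberhettingerBase a x
  have hU : 0 < U := oberhettingerBase_pos ha hx.le
  rw [show -ρ'.re = -ρ.re + (ρ.re - ρ'.re) by ring, Real.rpow_add hU]
  calc x ^ (μ.re - 1) * (U ^ (-ρ.re) * U ^ (ρ.re - ρ'.re))
      = U ^ (ρ.re - ρ'.re) * (x ^ (μ.re - 1) * U ^ (-ρ.re)) := by ring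
    _ ≤ a ^ (ρ.re - ρ'.re) * (x ^ (μ.re - 1) * U ^ (-ρ.re)) :=
        mul_le_mul_of_nonneg_right
          (Real.rpow_le_rpow_of_nonpos ha (le_oberhettingerBase hx.le) (by linarith))
          (by positivity)

theorem continuousOn_oberhettingerKernel (ha : 0 < a) (μ ρ : ℂ) :
    ContinuousOn (oberhettingerKernel a μ ρ) (Ioi 0) :=
  ((continuous_ofReal.continuousOn).cpow_const fun _ hx => ofReal_mem_slitPlane.2 hx).mul
    ((continuous_ofReal.comp continuous_oberhettingerBase).continuousOn.cpow_const
      fun _ hx => ofReal_mem_slitPlane.2 (oberhettingerBase_pos ha (le_of_lt hx)))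

theorem integrableOn_oberhettingerKernel (ha : 0 < a) (hμ : 0 < μ.re) (hρ : μ.re < ρ.re) :
    IntegrableOn (oberhettingerKernel a μ ρ) (Ioi 0) := by
  have hmeas : ∀ s ⊆ Ioi (0 : ℝ), MeasurableSet s →
      AEStronglyMeasurable (oberhettingerKernel a μ ρ) (volume.restrict s) :=
    fun s hs hms => ((continuousOn_oberhettingerKernel ha μ ρ).mono hs).aestronglyMeasurable hms
  rw [← Ioc_union_Ioi_eq_Ioi zero_le_one]
  refine IntegrableOn.union ?_ ?_
  · have hg : IntegrableOn (fun x : ℝ => a ^ (-ρ.re) * x ^ (μ.re - 1)) (Ioc 0 1) :=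
      (intervalIntegral.intervalIntegrable_rpow' (by linarith)).1.const_mul _
    refine hg.mono' (hmeas _ Ioc_subset_Ioi_self measurableSet_Ioc) ?_
    filter_upwards [ae_restrict_mem measurableSet_Ioc] with x hx
    have h0 := norm_oberhettingerKernel_le ha hx.1 μ (ρ := 0) (ρ' := ρ)
      (by rw [zero_re]; linarith)
    rwa [norm_oberhettingerKernel ha hx.1 μ 0, zero_re, neg_zero, Real.rpow_zero, mul_one,
      zero_sub] at h0
  · have hg : IntegrableOn (fun x : ℝ => x ^ (μ.re - 1 - ρ.re)) (Ioi 1) :=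
      integrableOn_Ioi_rpow_of_lt (by linarith) one_pos
    refine hg.mono' (hmeas _ (Ioi_subset_Ioi zero_le_one) measurableSet_Ioi) ?_
    filter_upwards [ae_restrict_mem measurableSet_Ioi] with x hx
    have hx0 : (0 : ℝ) < x := one_pos.trans hx
    rw [norm_oberhettingerKernel ha hx0, sub_eq_add_neg _ ρ.re, Real.rpow_add hx0]
    exact mul_le_mul_of_nonneg_left (Real.rpow_le_rpow_of_nonpos hx0
      (self_le_oberhettingerBase ha.le) (by linarith)) (by positivity)

end Kernel

theorem summable_integral_norm_mul_oberhettingerKernel {a : ℝ} (ha : 0 < a) {μ ρ : ℂ}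
    (hμ : 0 < μ.re) (hρ : μ.re < ρ.re) {T : ℕ → ℂ}
    (hT : Summable fun k => ‖T k‖ * (a ^ 2)⁻¹ ^ k) :
    Summable fun k : ℕ =>
      ∫ x in Ioi 0, ‖T k * oberhettingerKernel a μ (ρ + 2 * k) x‖ := by
  set I := ∫ x in Ioi 0, ‖oberhettingerKernel a μ ρ x‖
  have hI := (integrableOn_oberhettingerKernel ha hμ hρ).norm
  refine (hT.mul_right I).of_nonneg_of_le (fun _ => integral_nonneg fun _ => by positivity)
    fun k => ?_
  have hpow : a ^ (ρ.re - (ρ + 2 * k).re) = (a ^ 2)⁻¹ ^ k := by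
    rw [show ρ.re - (ρ + 2 * k).re = -((2 * k : ℕ) : ℝ) by simp, Real.rpow_neg ha.le,
      Real.rpow_natCast, pow_mul, inv_pow]
  have hk : Integrable (oberhettingerKernel a μ (ρ + 2 * k)) (volume.restrict (Ioi 0)) :=
    integrableOn_oberhettingerKernel ha hμ (by simp; linarith [k.cast_nonneg (α := ℝ)])
  calc ∫ x in Ioi 0, ‖T k * oberhettingerKernel a μ (ρ + 2 * k) x‖
      = ‖T k‖ * ∫ x in Ioi 0, ‖oberhettingerKernel a μ (ρ + 2 * k) x‖ := by
        simp_rw [norm_mul]; exact integral_const_mul _ _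
    _ ≤ ‖T k‖ * ∫ x in Ioi 0, (a ^ 2)⁻¹ ^ k * ‖oberhettingerKernel a μ ρ x‖ := by
        refine mul_le_mul_of_nonneg_left (setIntegral_mono_on hk.norm (hI.const_mul _)
          measurableSet_Ioi fun x hx => ?_) (norm_nonneg _)
        rw [← hpow]
        exact norm_oberhettingerKernel_le ha hx μ (by simp)
    _ = ‖T k‖ * (a ^ 2)⁻¹ ^ k * I := by rw [integral_const_mul, mul_assoc]

def struveTerm (p b c z : ℂ) (k : ℕ) : ℂ :=
  (-c) ^ k * (z / 2) ^ (2 * (k : ℂ) + p + 1) /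
    (Gamma ((k : ℂ) + 3 / 2) * Gamma ((k : ℂ) + p + (b + 2) / 2))

section Struve

variable {p b c z : ℂ}

theorem genStruve_eq_tsum_struveTerm : genStruve p b c z = ∑' k, struveTerm p b c z k := rfl

theorem struveTerm_ofReal_div {y U : ℝ} (hy : 0 ≤ y) (hU : 0 < U) (k : ℕ) :
    struveTerm p b c ((y : ℂ) / U) k =
      struveTerm p b c y k * (U : ℂ) ^ (-(2 * (k : ℂ) + p + 1)) := by
  rw [struveTerm, struveTerm,
    show (y : ℂ) / U / 2 = ((y / 2 : ℝ) : ℂ) / (U : ℂ) by push_cast; ring,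
    div_cpow_ofReal_nonneg (by positivity) hU.le, cpow_neg]
  push_cast
  ring

theorem cpow_neg_mul_genStruve_ofReal_div {y U : ℝ} (hy : 0 ≤ y) (hU : 0 < U) (l : ℂ) :
    (U : ℂ) ^ (-l) * genStruve p b c ((y : ℂ) / U) =
      ∑' k : ℕ, struveTerm p b c y k * (U : ℂ) ^ (-(l + p + 1 + 2 * (k : ℂ))) := by
  rw [genStruve_eq_tsum_struveTerm, ← tsum_mul_left]
  refine tsum_congr fun k => ?_
  rw [struveTerm_ofReal_div hy hU, mul_left_comm, ← cpow_add _ _ (ofReal_ne_zero.2 hU.ne')]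
  congr 2
  ring

theorem struveTerm_succ (hz : z ≠ 0) {k : ℕ} (hk : (k : ℂ) + p + (b + 2) / 2 ≠ 0) :
    struveTerm p b c z (k + 1) = struveTerm p b c z k * (-c * (z / 2) ^ (2 : ℂ)) /
      (((k : ℂ) + 3 / 2) * ((k : ℂ) + p + (b + 2) / 2)) := by
  have hk' : (k : ℂ) + 3 / 2 ≠ 0 := fun h => by
    have := congrArg re h; norm_num at this; linarith
  rw [struveTerm, struveTerm, Nat.cast_succ,
    show (k : ℂ) + 1 + 3 / 2 = (k : ℂ) + 3 / 2 + 1 by ring, Gamma_add_one _ hk',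
    show (k : ℂ) + 1 + p + (b + 2) / 2 = (k : ℂ) + p + (b + 2) / 2 + 1 by ring,
    Gamma_add_one _ hk, show 2 * ((k : ℂ) + 1) + p + 1 = 2 * (k : ℂ) + p + 1 + 2 by ring,
    cpow_add _ _ (div_ne_zero hz two_ne_zero), pow_succ, div_mul_eq_mul_div, div_div]
  congr 1 <;> ring

theorem summable_norm_struveTerm_mul_pow (hz : z ≠ 0) {β : ℝ} (hβ : 0 ≤ β) :
    Summable fun k => ‖struveTerm p b c z k‖ * β ^ k := by
  set w := p + (b + 2) / 2
  set D := ‖-c * (z / 2) ^ (2 : ℂ)‖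
  refine summable_of_ratio_norm_eventually_le (r := 1 / 2) (by norm_num) ?_
  filter_upwards [eventually_ge_atTop ⌈1 + ‖w‖⌉₊, eventually_ge_atTop ⌈2 * D * β⌉₊]
    with k hkw hkD
  replace hkw : 1 + ‖w‖ ≤ k := Nat.ceil_le.1 hkw
  replace hkD : 2 * D * β ≤ k := Nat.ceil_le.1 hkD
  set P := ‖(k : ℂ) + 3 / 2‖
  set Q := ‖(k : ℂ) + w‖
  have hQ : 1 ≤ Q := by
    have := norm_sub_norm_le (k : ℂ) (-w)
    rw [norm_neg, sub_neg_eq_add, norm_natCast] at this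
    linarith
  have hP : (k : ℝ) ≤ P := le_trans (by norm_num) (re_le_norm _)
  have hPQ : 2 * D * β ≤ P * Q := by nlinarith [norm_nonneg ((k : ℂ) + 3 / 2)]
  have hPQ0 : 0 < P * Q := mul_pos (by linarith [norm_nonneg w]) (by linarith)
  have hkw' : (k : ℂ) + p + (b + 2) / 2 ≠ 0 := by
    rw [add_assoc]; exact norm_pos_iff.1 (one_pos.trans_le hQ)
  have hrec : ‖struveTerm p b c z (k + 1)‖ = ‖struveTerm p b c z k‖ * (D / (P * Q)) := by
    rw [struveTerm_succ hz hkw', norm_div, norm_mul (struveTerm p b c z k),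
      norm_mul ((k : ℂ) + 3 / 2), mul_div_assoc, add_assoc (k : ℂ) p]
  rw [Real.norm_of_nonneg (by positivity), Real.norm_of_nonneg (by positivity), hrec, pow_succ]
  calc ‖struveTerm p b c z k‖ * (D / (P * Q)) * (β ^ k * β)
      = ‖struveTerm p b c z k‖ * β ^ k * (D * β / (P * Q)) := by ring
    _ ≤ ‖struveTerm p b c z k‖ * β ^ k * (1 / 2) := by
        refine mul_le_mul_of_nonneg_left ?_ (by positivity)
        rw [div_le_iff₀ hPQ0]
        linarith
    _ = 1 / 2 * (‖struveTerm p b c z k‖ * β ^ k) := mul_comm _ _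

end Struve

theorem integral_genStruve_oberhettinger (a y : ℝ) (ha : 0 < a) (hy : 0 < y)
    (b c p l m : ℂ) (hm : 0 < m.re) (hlm : m.re < (l + p).re + 1) :
    ∫ x in Set.Ioi (0 : ℝ),
        (x : ℂ) ^ (m - 1) *
          ((x + a + Real.sqrt (x ^ 2 + 2 * a * x) : ℝ) : ℂ) ^ (-l) *
          genStruve p b c ((y : ℂ) / ((x + a + Real.sqrt (x ^ 2 + 2 * a * x) : ℝ) : ℂ)) =
      ∑' k : ℕ,
        ((-c) ^ k * ((y : ℂ) / 2) ^ (2 * (k : ℂ) + p + 1) /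
            (Complex.Gamma ((k : ℂ) + 3 / 2) *
              Complex.Gamma ((k : ℂ) + p + (b + 2) / 2))) *
          (2 * (l + p + 1 + 2 * (k : ℂ)) * (a : ℂ) ^ (-(l + p + 1 + 2 * (k : ℂ))) *
            ((a : ℂ) / 2) ^ m * Complex.Gamma (2 * m) *
            Complex.Gamma (l + p + 1 + 2 * (k : ℂ) - m) /
            Complex.Gamma (1 + (l + p + 1 + 2 * (k : ℂ)) + m)) := by
  have hρ : m.re < (l + p + 1).re := by simpa using hlm
  have hρk (k : ℕ) : m.re < (l + p + 1 + 2 * (k : ℂ)).re := by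
    have := k.cast_nonneg (α := ℝ)
    simp only [add_re, mul_re, re_ofNat, im_ofNat, natCast_re, natCast_im] at hρ ⊢
    linarith
  have hseries : EqOn (fun x : ℝ => (x : ℂ) ^ (m - 1) * (oberhettingerBase a x : ℂ) ^ (-l) *
        genStruve p b c ((y : ℂ) / (oberhettingerBase a x : ℂ)))
      (fun x => ∑' k : ℕ, struveTerm p b c y k * oberhettingerKernel a m (l + p + 1 + 2 * k) x)
      (Ioi 0) := fun x hx => by
    simp only [mul_assoc, oberhettingerKernel, mul_left_comm _ ((x : ℂ) ^ (m - 1)), tsum_mul_left,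
      cpow_neg_mul_genStruve_ofReal_div hy.le (oberhettingerBase_pos ha (le_of_lt hx))]
  refine (setIntegral_congr_fun measurableSet_Ioi hseries).trans ?_
  rw [← integral_tsum_of_summable_integral_norm
    (fun k => ((integrableOn_oberhettingerKernel ha hm (hρk k)).const_mul _))
    (summable_integral_norm_mul_oberhettingerKernel ha hm hρ
      (summable_norm_struveTerm_mul_pow (ofReal_ne_zero.2 hy.ne') (by positivity)))]
  refine tsum_congr fun k => ?_
  rw [integral_const_mul, integral_oberhettingerKernel ha hm (hρk k), struveTerm]
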